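/- arXiv:1103.1414 — 3 statements merged into one kernel-verified Lean document; each statement's English description precedes it below -/
import Mathlib

section
/- Let Q be a 10-dimensional nondegenerate quadratic space over F2 of plus type (Witt index 5), and let Φ, Ψ be maximal totally singular subspaces with Φ ∩ Ψ = 0. Then in the orthogonal direct sum Q³ (with quadratic form q(a,b,c)=q(a)+q(b)+q(c)), the subspace S spanned by {(a,a,0), (0,a,a), (b,b,b) : a ∈ Φ, b ∈ Ψ} is a maximal totally singular subspace of Q³. -/
/-! The map `(a, a', b) ↦ (a + b, a + a' + b, a' + b)` from `Φ × Φ × Ψ` onto `S` is injective,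
so `dim S = 15`. Its image is totally singular because in characteristic two every cross term
`polar q a b`, `polar q a' b` appears twice, while `polar q a a'` vanishes on the totally singular
`Φ`. Finally, the polar form of `q³` is nondegenerate, so a totally singular subspace `W` satisfies
`W ≤ W^⊥` and hence `2 dim W ≤ 30 = 2 dim S`, forcing `W = S` once `S ≤ W`. -/

open Module QuadraticMap

namespace QuadraticMap

section CommRing

variable {R M₁ M₂ P : Type*} [CommRing R] [AddCommGroup M₁] [AddCommGroup M₂] [AddCommGroup P]
  [Module R M₁] [Module R M₂] [Module R P]

theorem isRefl_polarBilin (Q : QuadraticMap R M₁ P) : Q.polarBilin.IsRefl :=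
  fun x y h => by rwa [polarBilin_apply_apply, polar_comm, ← polarBilin_apply_apply]

theorem separatingLeft_polarBilin_prod {Q₁ : QuadraticMap R M₁ P} {Q₂ : QuadraticMap R M₂ P}
    (h₁ : Q₁.polarBilin.SeparatingLeft) (h₂ : Q₂.polarBilin.SeparatingLeft) :
    (Q₁.prod Q₂).polarBilin.SeparatingLeft := by
  intro x hx
  have hx₁ : x.1 = 0 := h₁ x.1 fun y => by simpa using hx (y, 0)
  have hx₂ : x.2 = 0 := h₂ x.2 fun y => by simpa using hx (0, y)
  exact Prod.ext hx₁ hx₂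

theorem le_orthogonal_polarBilin_of_forall_eq_zero {Q : QuadraticForm R M₁} {W : Submodule R M₁}
    (hW : ∀ x ∈ W, Q x = 0) : W ≤ LinearMap.BilinForm.orthogonal Q.polarBilin W := by
  intro x hx y hy
  change polar Q y x = 0
  rw [polar, hW _ (W.add_mem hy hx), hW y hy, hW x hx, sub_self, sub_zero]

end CommRing

section TotallySingular

variable {K V : Type*} [Field K] [AddCommGroup V] [Module K V] [FiniteDimensional K V]
  {Q : QuadraticForm K V}

theorem finrank_add_finrank_le_of_forall_eq_zero (hQ : Q.polarBilin.SeparatingLeft)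
    {W : Submodule K V} (hW : ∀ x ∈ W, Q x = 0) :
    finrank K W + finrank K W ≤ finrank K V := by
  have hnd : Q.polarBilin.Nondegenerate :=
    (isRefl_polarBilin Q).nondegenerate_iff_separatingLeft.mpr hQ
  have hle := Submodule.finrank_mono (le_orthogonal_polarBilin_of_forall_eq_zero hW)
  rw [LinearMap.BilinForm.finrank_orthogonal hnd] at hle
  have := W.finrank_le
  omega

theorem eq_of_le_of_forall_eq_zero (hQ : Q.polarBilin.SeparatingLeft)
    {S W : Submodule K V} (hS : finrank K V ≤ finrank K S + finrank K S) (hSW : S ≤ W)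
    (hW : ∀ x ∈ W, Q x = 0) : W = S := by
  have := finrank_add_finrank_le_of_forall_eq_zero hQ hW
  exact (Submodule.eq_of_le_of_finrank_le hSW (by omega)).symm

end TotallySingular

end QuadraticMap

section TripleMap

variable {R M : Type*} [CommRing R] [AddCommGroup M] [Module R M] (Φ Ψ : Submodule R M)

/-- `(a, a', b) ↦ (a, a, 0) + (0, a', a') + (b, b, b)`. -/
def tripleMap : Φ × Φ × Ψ →ₗ[R] M × M × M where
  toFun x := (x.1 + x.2.2, x.1 + x.2.1 + x.2.2, x.2.1 + x.2.2)
  map_add' x y := by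
    simp only [Prod.fst_add, Prod.snd_add, Submodule.coe_add, Prod.mk_add_mk, Prod.mk.injEq]
    refine ⟨by abel, by abel, by abel⟩
  map_smul' r x := by simp [smul_add]

theorem tripleMap_injective : Function.Injective (tripleMap Φ Ψ) := by
  rw [← LinearMap.ker_eq_bot, eq_bot_iff]
  rintro ⟨a, a', b⟩ h
  simp only [LinearMap.mem_ker, tripleMap, LinearMap.coe_mk, AddHom.coe_mk, Prod.mk_eq_zero] at h
  obtain ⟨h₁, h₂, h₃⟩ := h
  have ha' : (a' : M) = 0 := by rw [add_right_comm, h₁, zero_add] at h₂; exact h₂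
  have hb : (b : M) = 0 := by rwa [ha', zero_add] at h₃
  have ha : (a : M) = 0 := by rwa [hb, add_zero] at h₁
  simp [Subtype.ext_iff, ha, ha', hb]

theorem range_tripleMap : LinearMap.range (tripleMap Φ Ψ) = Submodule.span R
    {p : M × M × M | (∃ a ∈ Φ, p = (a, a, 0)) ∨ (∃ a ∈ Φ, p = (0, a, a)) ∨
      (∃ b ∈ Ψ, p = (b, b, b))} := by
  apply le_antisymm
  · rintro _ ⟨⟨a, a', b⟩, rfl⟩
    have hsum : tripleMap Φ Ψ (a, a', b) = ((a : M), (a : M), 0) + (0, (a' : M), (a' : M)) +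
        ((b : M), (b : M), (b : M)) := by
      simp only [tripleMap, LinearMap.coe_mk, AddHom.coe_mk, Prod.mk_add_mk, add_zero, zero_add]
    rw [hsum]
    refine add_mem (add_mem ?_ ?_) ?_ <;> apply Submodule.subset_span
    exacts [Or.inl ⟨a, a.2, rfl⟩, Or.inr (Or.inl ⟨a', a'.2, rfl⟩), Or.inr (Or.inr ⟨b, b.2, rfl⟩)]
  · rw [Submodule.span_le]
    rintro p (⟨a, ha, rfl⟩ | ⟨a, ha, rfl⟩ | ⟨b, hb, rfl⟩)
    · exact ⟨(⟨a, ha⟩, 0, 0), by simp [tripleMap]⟩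
    · exact ⟨(0, ⟨a, ha⟩, 0), by simp [tripleMap]⟩
    · exact ⟨(0, 0, ⟨b, hb⟩), by simp [tripleMap]⟩

theorem tripleMap_isotropic [CharP R 2] {q : QuadraticMap R M R} (hΦ : ∀ x ∈ Φ, q x = 0)
    (hΨ : ∀ x ∈ Ψ, q x = 0) (x : Φ × Φ × Ψ) :
    q (tripleMap Φ Ψ x).1 + q (tripleMap Φ Ψ x).2.1 + q (tripleMap Φ Ψ x).2.2 = 0 := by
  obtain ⟨⟨a, ha⟩, ⟨a', ha'⟩, ⟨b, hb⟩⟩ := x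
  have hq : ∀ x y : M, q (x + y) = q x + q y + polar q x y := fun x y => by rw [polar]; ring
  have haa' : polar q a a' = 0 := by
    rw [polar, hΦ _ (Φ.add_mem ha ha'), hΦ a ha, hΦ a' ha', sub_self, sub_zero]
  simp only [tripleMap, LinearMap.coe_mk, AddHom.coe_mk, hq, polar_add_left, hΦ a ha,
    hΦ a' ha', hΨ b hb, haa']
  linear_combination CharTwo.add_self_eq_zero (polar q a b) +
    CharTwo.add_self_eq_zero (polar q a' b)

end TripleMap

theorem stmt_0_general (Q : Type) [AddCommGroup Q] [Module (ZMod 2) Q]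
    (q : QuadraticForm (ZMod 2) Q)
    (hdim : Module.finrank (ZMod 2) Q = 10)
    (hnd : ∀ x : Q, (∀ y : Q, q (x + y) - q x - q y = 0) → x = 0)
    (Φ Ψ : Submodule (ZMod 2) Q)
    (hΦsing : ∀ x ∈ Φ, q x = 0) (hΨsing : ∀ x ∈ Ψ, q x = 0)
    (hΦdim : Module.finrank (ZMod 2) Φ = 5) (hΨdim : Module.finrank (ZMod 2) Ψ = 5)
    (S : Submodule (ZMod 2) (Q × Q × Q))
    (hS : S = Submodule.span (ZMod 2)
      {p : Q × Q × Q | (∃ a ∈ Φ, p = (a, a, 0)) ∨ (∃ a ∈ Φ, p = (0, a, a)) ∨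
        (∃ b ∈ Ψ, p = (b, b, b))}) :
    (∀ u ∈ S, q u.1 + q u.2.1 + q u.2.2 = 0) ∧
    (∀ W : Submodule (ZMod 2) (Q × Q × Q), S ≤ W →
      (∀ u ∈ W, q u.1 + q u.2.1 + q u.2.2 = 0) → W = S) ∧
    Module.finrank (ZMod 2) S = 15 := by
  have : FiniteDimensional (ZMod 2) Q := Module.finite_of_finrank_eq_succ hdim
  rw [← range_tripleMap] at hS
  subst hS
  have hSdim : finrank (ZMod 2) (LinearMap.range (tripleMap Φ Ψ)) = 15 := by
    rw [LinearMap.finrank_range_of_inj (tripleMap_injective Φ Ψ), finrank_prod, finrank_prod,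
      hΦdim, hΨdim]
  refine ⟨?_, fun W hSW hW => ?_, hSdim⟩
  · rintro _ ⟨x, rfl⟩
    exact tripleMap_isotropic Φ Ψ hΦsing hΨsing x
  · have hq : q.polarBilin.SeparatingLeft := hnd
    refine eq_of_le_of_forall_eq_zero
      (separatingLeft_polarBilin_prod hq (separatingLeft_polarBilin_prod hq hq)) ?_ hSW
      fun u hu => by simpa [add_assoc] using hW u hu
    rw [finrank_prod, finrank_prod, hdim, hSdim]

/-- With `Q` a 10-dimensional nondegenerate `F₂`-quadratic space of plus
type and `Φ, Ψ` maximal totally singular subspaces with `Φ ⊓ Ψ = ⊥`, the span `S` of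
`{(a,a,0), (0,a,a), (b,b,b) : a ∈ Φ, b ∈ Ψ}` is a maximal totally singular subspace of
`Q³` (with `q(a,b,c) = q a + q b + q c`); in particular it is totally singular of
dimension 15. -/
theorem stmt_0 (Q : Type) [AddCommGroup Q] [Module (ZMod 2) Q]
    (q : QuadraticForm (ZMod 2) Q)
    (hdim : Module.finrank (ZMod 2) Q = 10)
    (hnd : ∀ x : Q, (∀ y : Q, q (x + y) - q x - q y = 0) → x = 0)
    (Φ Ψ : Submodule (ZMod 2) Q)
    (hΦsing : ∀ x ∈ Φ, q x = 0) (hΨsing : ∀ x ∈ Ψ, q x = 0)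
    (hΦdim : Module.finrank (ZMod 2) Φ = 5) (hΨdim : Module.finrank (ZMod 2) Ψ = 5)
    (hΦmax : ∀ W : Submodule (ZMod 2) Q, Φ ≤ W → (∀ x ∈ W, q x = 0) → W = Φ)
    (hΨmax : ∀ W : Submodule (ZMod 2) Q, Ψ ≤ W → (∀ x ∈ W, q x = 0) → W = Ψ)
    (hint : Φ ⊓ Ψ = ⊥)
    (S : Submodule (ZMod 2) (Q × Q × Q))
    (hS : S = Submodule.span (ZMod 2)
      {p : Q × Q × Q | (∃ a ∈ Φ, p = (a, a, 0)) ∨ (∃ a ∈ Φ, p = (0, a, a)) ∨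
        (∃ b ∈ Ψ, p = (b, b, b))}) :
    (∀ u ∈ S, q u.1 + q u.2.1 + q u.2.2 = 0) ∧
    (∀ W : Submodule (ZMod 2) (Q × Q × Q), S ≤ W →
      (∀ u ∈ W, q u.1 + q u.2.1 + q u.2.2 = 0) → W = S) ∧
    Module.finrank (ZMod 2) S = 15 :=
  stmt_0_general Q q hdim hnd Φ Ψ hΦsing hΨsing hΦdim hΨdim S hS
end

section
/- With Q, Φ, Ψ, S as above, assign to each element (u1,u2,u3) ∈ Q³ a weight w(u1,u2,u3) = w(u1)+w(u2)+w(u3), where w(0)=0, w(u)=1 if u is nonzero singular, and w(u)=1/2 if u is nonsingular. Then every nonzero element of S has weight at least 2. -/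
/-- With the weight function `w(0) = 0`, `w(u) = 1` for `u ≠ 0` singular,
`w(u) = 1/2` for `u` nonsingular, and the weight of a triple the sum of the coordinate
weights, every nonzero element of `S` has weight at least `2`. -/
theorem stmt_2 (Q : Type) [AddCommGroup Q] [Module (ZMod 2) Q] [DecidableEq Q]
    (q : QuadraticForm (ZMod 2) Q)
    (hdim : Module.finrank (ZMod 2) Q = 10)
    (hnd : ∀ x : Q, (∀ y : Q, q (x + y) - q x - q y = 0) → x = 0)
    (Φ Ψ : Submodule (ZMod 2) Q)
    (hΦsing : ∀ x ∈ Φ, q x = 0) (hΨsing : ∀ x ∈ Ψ, q x = 0)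
    (hΦdim : Module.finrank (ZMod 2) Φ = 5) (hΨdim : Module.finrank (ZMod 2) Ψ = 5)
    (hint : Φ ⊓ Ψ = ⊥)
    (S : Submodule (ZMod 2) (Q × Q × Q))
    (hS : S = Submodule.span (ZMod 2)
      {p : Q × Q × Q | (∃ a ∈ Φ, p = (a, a, 0)) ∨ (∃ a ∈ Φ, p = (0, a, a)) ∨
        (∃ b ∈ Ψ, p = (b, b, b))})
    (w : Q → ℚ)
    (hw : ∀ u : Q, w u = if u = 0 then 0 else if q u = 0 then 1 else 1 / 2) :
    ∀ s ∈ S, s ≠ 0 → (2 : ℚ) ≤ w s.1 + w s.2.1 + w s.2.2 := by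
  -- basic facts about w
  have hw0 : w 0 = 0 := by rw [hw]; simp
  have hwnn : ∀ u : Q, 0 ≤ w u := by
    intro u; rw [hw]; split_ifs <;> norm_num
  have hwhalf : ∀ u : Q, u ≠ 0 → (1/2 : ℚ) ≤ w u := by
    intro u hu; rw [hw]; split_ifs <;> norm_num; exact absurd ‹u = 0› hu
  have hwone : ∀ u : Q, u ≠ 0 → q u = 0 → w u = 1 := by
    intro u hu hq; rw [hw]; split_ifs <;> first | rfl | tauto
  -- the parametrizing linear map
  let f : (Q × Q × Q) →ₗ[ZMod 2] (Q × Q × Q) :=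
    { toFun := fun p => (p.1 + p.2.2, p.1 + p.2.1 + p.2.2, p.2.1 + p.2.2)
      map_add' := by
        intro x y
        simp only [Prod.ext_iff, Prod.fst_add, Prod.snd_add]
        refine ⟨by abel, by abel, by abel⟩
      map_smul' := by intro c x; simp [Prod.ext_iff, smul_add] }
  have hsub : S ≤ Submodule.map f (Φ.prod (Φ.prod Ψ)) := by
    rw [hS]; apply Submodule.span_le.2
    rintro p (⟨a, ha, rfl⟩ | ⟨a, ha, rfl⟩ | ⟨b, hb, rfl⟩)
    · exact ⟨(a, 0, 0), ⟨ha, Φ.zero_mem, Ψ.zero_mem⟩, by simp [f]⟩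
    · exact ⟨(0, a, 0), ⟨Φ.zero_mem, ha, Ψ.zero_mem⟩, by simp [f]⟩
    · exact ⟨(0, 0, b), ⟨Φ.zero_mem, Φ.zero_mem, hb⟩, by simp [f]⟩
  intro s hs hns
  obtain ⟨⟨a, a', b⟩, ⟨ha, ha', hb⟩, rfl⟩ := hsub hs
  simp only [f, LinearMap.coe_mk, AddHom.coe_mk] at hns ⊢
  have haa' : a + a' ∈ Φ := Φ.add_mem ha ha'
  by_cases hb0 : b = 0
  · -- coordinates a, a + a', a', all singular
    subst hb0
    simp only [add_zero] at hns ⊢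
    by_cases ha0 : a = 0
    · subst ha0
      have ha'0 : a' ≠ 0 := by
        intro h; subst h; simp at hns
      simp only [zero_add, hw0]
      rw [hwone a' ha'0 (hΦsing a' ha')]
      norm_num
    · by_cases ha'0 : a' = 0
      · subst ha'0
        simp only [add_zero, hw0]
        rw [hwone a ha0 (hΦsing a ha)]
        norm_num
      · have h1 := hwone a ha0 (hΦsing a ha)
        have h2 := hwone a' ha'0 (hΦsing a' ha')
        have h3 := hwnn (a + a')
        linarith
  · -- all coordinates nonzero; one of them singular
    have hab : a + b ≠ 0 := by
      intro h
      have : b ∈ Φ ⊓ Ψ := ⟨by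
        have : b = -a := by linear_combination (norm := abel) h
        rw [this]; exact Φ.neg_mem ha, hb⟩
      rw [hint] at this
      exact hb0 this
    have ha'b : a' + b ≠ 0 := by
      intro h
      have : b ∈ Φ ⊓ Ψ := ⟨by
        have : b = -a' := by linear_combination (norm := abel) h
        rw [this]; exact Φ.neg_mem ha', hb⟩
      rw [hint] at this
      exact hb0 this
    have haab : a + a' + b ≠ 0 := by
      intro h
      have : b ∈ Φ ⊓ Ψ := ⟨by
        have : b = -(a + a') := by linear_combination (norm := abel) h
        rw [this]; exact Φ.neg_mem haa', hb⟩
      rw [hint] at this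
      exact hb0 this
    -- q-value relation
    have hpol := QuadraticMap.polar_add_left (Q := q) a a' b
    simp only [QuadraticMap.polar] at hpol
    rw [hΦsing a ha, hΦsing a' ha', hΦsing _ haa', hΨsing b hb] at hpol
    simp only [sub_zero] at hpol
    -- hpol : q (a + a' + b) = q (a + b) + q (a' + b)
    have key : q (a + b) = 0 ∨ q (a + a' + b) = 0 ∨ q (a' + b) = 0 := by
      have : ∀ x y : ZMod 2, x = 0 ∨ x + y = 0 ∨ y = 0 := by decide
      rcases this (q (a + b)) (q (a' + b)) with h | h | h
      · exact Or.inl h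
      · exact Or.inr (Or.inl (by rw [hpol]; exact h))
      · exact Or.inr (Or.inr h)
    rcases key with h | h | h
    · have h1 := hwone _ hab h
      have h2 := hwhalf _ haab
      have h3 := hwhalf _ ha'b
      linarith
    · have h1 := hwone _ haab h
      have h2 := hwhalf _ hab
      have h3 := hwhalf _ ha'b
      linarith
    · have h1 := hwone _ ha'b h
      have h2 := hwhalf _ hab
      have h3 := hwhalf _ haab
      linarith
end

section
/- With Q, Φ, Ψ, S and the weight function as above, an element of S has weight exactly 2 if and only if, up to a permutation of the three coordinates, it is of the form (a, a, 0) with a ∈ Φ \ {0}, or of the form (a+b+c, a+c, b+c) with a, b ∈ Φ \ {0}, c ∈ Ψ, where a+c and b+c are nonsingular and a+b+c is nonzero singular. -/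
theorem stmt3_aux {Q : Type} [AddCommGroup Q] [Module (ZMod 2) Q]
    (q : QuadraticForm (ZMod 2) Q) (Φ Ψ : Submodule (ZMod 2) Q)
    (hΨsing : ∀ x ∈ Ψ, q x = 0)
    (x y z : Q) (hxy : x + y ∈ Φ) (hyz : y + z ∈ Φ) (hxyz : x + y + z ∈ Ψ)
    (hx0 : x ≠ 0) (hqx : q x = 0) (hqy : q y = 1) (hqz : q z = 1) :
    ∃ a ∈ Φ, ∃ b ∈ Φ, ∃ c ∈ Ψ, a ≠ 0 ∧ b ≠ 0 ∧
      q (a + c) = 1 ∧ q (b + c) = 1 ∧ a + b + c ≠ 0 ∧ q (a + b + c) = 0 ∧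
      x = a + b + c ∧ y = a + c ∧ z = b + c := by
  have h2 : ∀ u : Q, u + u = 0 := by
    intro u
    have h := two_smul (ZMod 2) u
    rw [show (2 : ZMod 2) = 0 by decide, zero_smul] at h
    exact h.symm
  have hxz : x + z ∈ Φ := by
    have e : x + z = (x + y) + (y + z) := by
      have e2 : (x + y) + (y + z) = x + (y + y) + z := by abel
      rw [e2, h2, add_zero]
    rw [e]; exact Φ.add_mem hxy hyz
  have eq1 : (x + z) + (x + y + z) = y := by
    have e : (x + z) + (x + y + z) = (x + x) + y + (z + z) := by abel
    rw [e, h2, h2, zero_add, add_zero]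
  have eq2 : (x + y) + (x + y + z) = z := by
    have e : (x + y) + (x + y + z) = (x + x) + (y + y) + z := by abel
    rw [e, h2, h2, zero_add, zero_add]
  have eq3 : (x + z) + (x + y) + (x + y + z) = x := by
    have e : (x + z) + (x + y) + (x + y + z) = x + (x + x) + (y + y) + (z + z) := by abel
    rw [e, h2, h2, h2, add_zero, add_zero, add_zero]
  have one_ne : (1 : ZMod 2) ≠ 0 := by decide
  refine ⟨x + z, hxz, x + y, hxy, x + y + z, hxyz, ?_, ?_, ?_, ?_, ?_, ?_, eq3.symm,
    eq1.symm, eq2.symm⟩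
  · intro h
    rw [h, zero_add] at eq1
    have hy0 : q y = 0 := by rw [← eq1]; exact hΨsing _ hxyz
    rw [hqy] at hy0
    exact one_ne hy0
  · intro h
    have hz' : x + y + z = z := by rw [h, zero_add]
    have hz0 : q z = 0 := by rw [← hz']; exact hΨsing _ hxyz
    rw [hqz] at hz0
    exact one_ne hz0
  · rw [eq1]; exact hqy
  · rw [eq2]; exact hqz
  · rw [eq3]; exact hx0
  · rw [eq3]; exact hqx

/-- An element of `S` has weight exactly `2` iff, up to a permutation of
the three coordinates, it is `(a, a, 0)` with `a ∈ Φ \ {0}`, or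
`(a+b+c, a+c, b+c)` with `a, b ∈ Φ \ {0}`, `c ∈ Ψ`, where `a+c`, `b+c` are
nonsingular and `a+b+c` is nonzero singular. -/
theorem stmt_3 (Q : Type) [AddCommGroup Q] [Module (ZMod 2) Q] [DecidableEq Q]
    (q : QuadraticForm (ZMod 2) Q)
    (hdim : Module.finrank (ZMod 2) Q = 10)
    (hnd : ∀ x : Q, (∀ y : Q, q (x + y) - q x - q y = 0) → x = 0)
    (Φ Ψ : Submodule (ZMod 2) Q)
    (hΦsing : ∀ x ∈ Φ, q x = 0) (hΨsing : ∀ x ∈ Ψ, q x = 0)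
    (hΦdim : Module.finrank (ZMod 2) Φ = 5) (hΨdim : Module.finrank (ZMod 2) Ψ = 5)
    (hint : Φ ⊓ Ψ = ⊥)
    (S : Submodule (ZMod 2) (Q × Q × Q))
    (hS : S = Submodule.span (ZMod 2)
      {p : Q × Q × Q | (∃ a ∈ Φ, p = (a, a, 0)) ∨ (∃ a ∈ Φ, p = (0, a, a)) ∨
        (∃ b ∈ Ψ, p = (b, b, b))})
    (w : Q → ℚ)
    (hw : ∀ u : Q, w u = if u = 0 then 0 else if q u = 0 then 1 else 1 / 2) :
    ∀ s ∈ S,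
      (w s.1 + w s.2.1 + w s.2.2 = 2 ↔
        ∃ σ : Equiv.Perm (Fin 3),
          ((∃ a ∈ Φ, a ≠ 0 ∧
              ![s.1, s.2.1, s.2.2] (σ 0) = a ∧ ![s.1, s.2.1, s.2.2] (σ 1) = a ∧
              ![s.1, s.2.1, s.2.2] (σ 2) = 0) ∨
           (∃ a ∈ Φ, ∃ b ∈ Φ, ∃ c ∈ Ψ, a ≠ 0 ∧ b ≠ 0 ∧
              q (a + c) = 1 ∧ q (b + c) = 1 ∧ a + b + c ≠ 0 ∧ q (a + b + c) = 0 ∧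
              ![s.1, s.2.1, s.2.2] (σ 0) = a + b + c ∧
              ![s.1, s.2.1, s.2.2] (σ 1) = a + c ∧
              ![s.1, s.2.1, s.2.2] (σ 2) = b + c))) := by
  have h2 : ∀ u : Q, u + u = 0 := by
    intro u
    have h := two_smul (ZMod 2) u
    rw [show (2 : ZMod 2) = 0 by decide, zero_smul] at h
    exact h.symm
  have one_ne : (1 : ZMod 2) ≠ 0 := by decide
  have zne : ∀ t : ZMod 2, t ≠ 0 → t = 1 := by decide
  have bot : ∀ x : Q, x ∈ Φ → x ∈ Ψ → x = 0 := by
    intro x hx1 hx2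
    have hx : x ∈ Φ ⊓ Ψ := ⟨hx1, hx2⟩
    rw [hint] at hx
    simpa using hx
  have cancel : ∀ x y : Q, x + y = 0 → y = x := by
    intro x y h
    have hh : x + (x + y) = x := by rw [h, add_zero]
    rwa [← add_assoc, h2, zero_add] at hh
  -- membership characterization
  have key : ∀ t ∈ S, t.1 + t.2.1 ∈ Φ ∧ t.2.1 + t.2.2 ∈ Φ ∧ t.1 + t.2.1 + t.2.2 ∈ Ψ := by
    intro t ht
    rw [hS] at ht
    induction ht using Submodule.span_induction with
    | mem x hx =>
      obtain ⟨a, ha, rfl⟩ | ⟨a, ha, rfl⟩ | ⟨b, hb, rfl⟩ := hx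
      · exact ⟨by simpa [h2] using Φ.zero_mem, by simpa using ha,
          by simpa [h2] using Ψ.zero_mem⟩
      · exact ⟨by simpa using ha, by simpa [h2] using Φ.zero_mem,
          by simpa [h2] using Ψ.zero_mem⟩
      · exact ⟨by simpa [h2] using Φ.zero_mem, by simpa [h2] using Φ.zero_mem,
          by simpa [h2] using hb⟩
    | zero => simp
    | add x y hx hy ihx ihy =>
      obtain ⟨i1, i2, i3⟩ := ihx
      obtain ⟨j1, j2, j3⟩ := ihy
      refine ⟨?_, ?_, ?_⟩
      · show (x.1 + y.1) + (x.2.1 + y.2.1) ∈ Φ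
        have e : (x.1 + y.1) + (x.2.1 + y.2.1) = (x.1 + x.2.1) + (y.1 + y.2.1) := by abel
        rw [e]; exact Φ.add_mem i1 j1
      · show (x.2.1 + y.2.1) + (x.2.2 + y.2.2) ∈ Φ
        have e : (x.2.1 + y.2.1) + (x.2.2 + y.2.2) = (x.2.1 + x.2.2) + (y.2.1 + y.2.2) := by
          abel
        rw [e]; exact Φ.add_mem i2 j2
      · show (x.1 + y.1) + (x.2.1 + y.2.1) + (x.2.2 + y.2.2) ∈ Ψ
        have e : (x.1 + y.1) + (x.2.1 + y.2.1) + (x.2.2 + y.2.2) =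
            (x.1 + x.2.1 + x.2.2) + (y.1 + y.2.1 + y.2.2) := by abel
        rw [e]; exact Ψ.add_mem i3 j3
    | smul c x hx ih =>
      rcases (show ∀ t : ZMod 2, t = 0 ∨ t = 1 by decide) c with rfl | rfl
      · simp
      · simpa using ih
  intro s hs
  obtain ⟨u, v, z⟩ := s
  obtain ⟨hΦ1, hΦ2, hΨ3⟩ := key _ hs
  dsimp only at hΦ1 hΦ2 hΨ3 ⊢
  have hΦ3 : u + z ∈ Φ := by
    have e : u + z = (u + v) + (v + z) := by
      have e2 : (u + v) + (v + z) = u + (v + v) + z := by abel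
      rw [e2, h2, add_zero]
    rw [e]; exact Φ.add_mem hΦ1 hΦ2
  constructor
  · intro hsum
    rw [hw u, hw v, hw z] at hsum
    have tri : ∀ x : Q,
        ((if x = 0 then (0:ℚ) else if q x = 0 then 1 else 1/2) = 0 ∧ x = 0) ∨
        ((if x = 0 then (0:ℚ) else if q x = 0 then 1 else 1/2) = 1 ∧ x ≠ 0 ∧ q x = 0) ∨
        ((if x = 0 then (0:ℚ) else if q x = 0 then 1 else 1/2) = 1/2 ∧ x ≠ 0 ∧ q x = 1) := by
      intro x
      by_cases h0 : x = 0
      · exact Or.inl ⟨by simp [h0], h0⟩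
      by_cases hq : q x = 0
      · exact Or.inr (Or.inl ⟨by simp [h0, hq], h0, hq⟩)
      · exact Or.inr (Or.inr ⟨by simp [h0, hq], h0, zne _ hq⟩)
    rcases tri u with ⟨wu, hu⟩ | ⟨wu, hu⟩ | ⟨wu, hu⟩ <;>
      rcases tri v with ⟨wv, hv⟩ | ⟨wv, hv⟩ | ⟨wv, hv⟩ <;>
        rcases tri z with ⟨wz, hz⟩ | ⟨wz, hz⟩ | ⟨wz, hz⟩ <;>
          rw [wu, wv, wz] at hsum <;> first
          | (exfalso; norm_num at hsum; done)
          | skip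
    -- case (0, sing, sing)
    · obtain ⟨hv0, hqv⟩ := hv
      have hvz : v + z ∈ Ψ := by rwa [hu, zero_add] at hΨ3
      have hzv : z = v := cancel v z (bot _ hΦ2 hvz)
      have hvΦ : v ∈ Φ := by rwa [hu, zero_add] at hΦ1
      refine ⟨finRotate 3, Or.inl ⟨v, hvΦ, hv0, ?_, ?_, ?_⟩⟩
      · rw [show (finRotate 3 : Equiv.Perm (Fin 3)) 0 = 1 by decide]; simp
      · rw [show (finRotate 3 : Equiv.Perm (Fin 3)) 1 = 2 by decide]; simp [hzv]
      · rw [show (finRotate 3 : Equiv.Perm (Fin 3)) 2 = 0 by decide]; simp [hu]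
    -- case (sing, 0, sing)
    · obtain ⟨hu0, hqu⟩ := hu
      have huz : u + z ∈ Ψ := by
        have e : u + v + z = u + z := by rw [hv, add_zero]
        rwa [e] at hΨ3
      have hzu : z = u := cancel u z (bot _ hΦ3 huz)
      have huΦ : u ∈ Φ := by rwa [hv, add_zero] at hΦ1
      refine ⟨Equiv.swap 1 2, Or.inl ⟨u, huΦ, hu0, ?_, ?_, ?_⟩⟩
      · rw [show (Equiv.swap 1 2 : Equiv.Perm (Fin 3)) 0 = 0 by decide]; simp
      · rw [show (Equiv.swap 1 2 : Equiv.Perm (Fin 3)) 1 = 2 by decide]; simp [hzu]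
      · rw [show (Equiv.swap 1 2 : Equiv.Perm (Fin 3)) 2 = 1 by decide]; simp [hv]
    -- case (sing, sing, 0)
    · obtain ⟨hv0, hqv⟩ := hv
      have huv : u + v ∈ Ψ := by rwa [hz, add_zero] at hΨ3
      have hvu : v = u := cancel u v (bot _ hΦ1 huv)
      have hvΦ : v ∈ Φ := by rwa [hz, add_zero] at hΦ2
      refine ⟨1, Or.inl ⟨v, hvΦ, hv0, ?_, ?_, ?_⟩⟩
      · simp [hvu]
      · simp
      · simp [hz]
    -- case (sing, nonsing, nonsing)
    · obtain ⟨hu0, hqu⟩ := hu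
      obtain ⟨a, haΦ, b, hbΦ, c, hcΨ, ha0, hb0, qac, qbc, habc, qabc, e1, e2, e3⟩ :=
        stmt3_aux q Φ Ψ hΨsing u v z hΦ1 hΦ2 hΨ3 hu0 hqu hv.2 hz.2
      exact ⟨1, Or.inr ⟨a, haΦ, b, hbΦ, c, hcΨ, ha0, hb0, qac, qbc, habc, qabc,
        by simpa using e1, by simpa using e2, by simpa using e3⟩⟩
    -- case (nonsing, sing, nonsing)
    · obtain ⟨hv0, hqv⟩ := hv
      have hvu : v + u ∈ Φ := by rwa [add_comm] at hΦ1
      have hvuz : v + u + z ∈ Ψ := by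
        have e : v + u + z = u + v + z := by abel
        rwa [e]
      obtain ⟨a, haΦ, b, hbΦ, c, hcΨ, ha0, hb0, qac, qbc, habc, qabc, e1, e2, e3⟩ :=
        stmt3_aux q Φ Ψ hΨsing v u z hvu hΦ3 hvuz hv0 hqv hu.2 hz.2
      refine ⟨Equiv.swap 0 1, Or.inr ⟨a, haΦ, b, hbΦ, c, hcΨ, ha0, hb0, qac, qbc, habc,
        qabc, ?_, ?_, ?_⟩⟩
      · rw [show (Equiv.swap 0 1 : Equiv.Perm (Fin 3)) 0 = 1 by decide]; simpa using e1
      · rw [show (Equiv.swap 0 1 : Equiv.Perm (Fin 3)) 1 = 0 by decide]; simpa using e2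
      · rw [show (Equiv.swap 0 1 : Equiv.Perm (Fin 3)) 2 = 2 by decide]; simpa using e3
    -- case (nonsing, nonsing, sing)
    · obtain ⟨hz0, hqz⟩ := hz
      have hzu : z + u ∈ Φ := by rwa [add_comm] at hΦ3
      have hzuv : z + u + v ∈ Ψ := by
        have e : z + u + v = u + v + z := by abel
        rwa [e]
      obtain ⟨a, haΦ, b, hbΦ, c, hcΨ, ha0, hb0, qac, qbc, habc, qabc, e1, e2, e3⟩ :=
        stmt3_aux q Φ Ψ hΨsing z u v hzu hΦ1 hzuv hz0 hqz hu.2 hv.2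
      refine ⟨finRotate 3 * finRotate 3, Or.inr ⟨a, haΦ, b, hbΦ, c, hcΨ, ha0, hb0, qac,
        qbc, habc, qabc, ?_, ?_, ?_⟩⟩
      · rw [show (finRotate 3 * finRotate 3 : Equiv.Perm (Fin 3)) 0 = 2 by decide]
        simpa using e1
      · rw [show (finRotate 3 * finRotate 3 : Equiv.Perm (Fin 3)) 1 = 0 by decide]
        simpa using e2
      · rw [show (finRotate 3 * finRotate 3 : Equiv.Perm (Fin 3)) 2 = 1 by decide]
        simpa using e3
  · rintro ⟨σ, hcase⟩
    have hsum : w u + w v + w z =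
        w (![u, v, z] (σ 0)) + w (![u, v, z] (σ 1)) + w (![u, v, z] (σ 2)) := by
      have h := Equiv.sum_comp σ (fun i => w (![u, v, z] i))
      rw [Fin.sum_univ_three, Fin.sum_univ_three] at h
      simp only [Matrix.cons_val_zero, Matrix.cons_val_one, Matrix.head_cons,
        Matrix.cons_val_two, Matrix.tail_cons] at h
      exact h.symm
    rcases hcase with ⟨a, haΦ, ha0, e0, e1, e2⟩ |
      ⟨a, haΦ, b, hbΦ, c, hcΨ, ha0, hb0, qac, qbc, habc, qabc, e0, e1, e2⟩
    · rw [hsum, e0, e1, e2, hw a, hw 0]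
      rw [if_neg ha0, if_pos (hΦsing a haΦ), if_pos rfl]
      norm_num
    · have hac0 : a + c ≠ 0 := by
        intro h
        rw [h, map_zero] at qac
        exact one_ne qac.symm
      have hbc0 : b + c ≠ 0 := by
        intro h
        rw [h, map_zero] at qbc
        exact one_ne qbc.symm
      rw [hsum, e0, e1, e2, hw (a + b + c), hw (a + c), hw (b + c)]
      rw [if_neg habc, if_pos qabc, if_neg hac0, if_neg hbc0,
        if_neg (show ¬ q (a + c) = 0 by rw [qac]; exact one_ne),
        if_neg (show ¬ q (b + c) = 0 by rw [qbc]; exact one_ne)]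
      norm_num
end
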